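/- The Legendre–Fenchel transform Φ(u) = sup_{x>0}(h_A(x) − u·x) is strictly decreasing and strictly convex on (0,∞). -/

import Mathlib

/-!
The derivative `h_A'(x) = h₀ x^(α-1) + A₀ (1-γ) x^(α(1-γ)-1)` is decreasing, so `h_A` is concave,
and it runs from `+∞` (at `0⁺`) down to `0` (at `∞`). Hence for `u > 0` the supremum defining `Φ(u)`
is attained at a point `c` with `h_A'(c) = u`. Then `Φ(v) = h_A(c) - v c < h_A(c) - u c ≤ Φ(u)` for
`u < v` and `c` the maximiser for `v`, and `Φ` is convex as a supremum of affine functions of `u`;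
strictness holds because a common maximiser `c` for two slopes `u ≠ v` would give `u = h_A'(c) = v`.
-/

open Set Filter Topology

/-- `sSup` of an unbounded set is `0`; every result below assumes the supremum is attained. -/
noncomputable def legendreTransform (h : ℝ → ℝ) (u : ℝ) : ℝ :=
  sSup ((fun x => h x - u * x) '' Ioi 0)

section LegendreTransform

variable {h h' : ℝ → ℝ} {s : Set ℝ} {u c : ℝ}

theorem legendreTransform_eq_of_isMaxOn (hc : c ∈ Ioi (0 : ℝ))
    (hmax : IsMaxOn (fun x => h x - u * x) (Ioi 0) c) :
    legendreTransform h u = h c - u * c :=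
  IsGreatest.csSup_eq ⟨mem_image_of_mem _ hc, forall_mem_image.2 hmax⟩

theorem sub_mul_le_legendreTransform (hc : c ∈ Ioi (0 : ℝ))
    (hmax : IsMaxOn (fun x => h x - u * x) (Ioi 0) c) {x : ℝ} (hx : x ∈ Ioi (0 : ℝ)) :
    h x - u * x ≤ legendreTransform h u := by
  rw [legendreTransform_eq_of_isMaxOn hc hmax]
  exact hmax hx

theorem eq_of_isMaxOn_sub_mul (hc : c ∈ Ioi (0 : ℝ))
    (hmax : IsMaxOn (fun x => h x - u * x) (Ioi 0) c) {d : ℝ} (hd : HasDerivAt h d c) :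
    u = d := by
  have hF := hd.sub ((hasDerivAt_id' c).const_mul u)
  rw [mul_one] at hF
  linarith [(hmax.isLocalMax (isOpen_Ioi.mem_nhds hc)).hasDerivAt_eq_zero hF]

theorem strictAntiOn_legendreTransform
    (hmax : ∀ u ∈ s, ∃ c ∈ Ioi (0 : ℝ), IsMaxOn (fun x => h x - u * x) (Ioi 0) c) :
    StrictAntiOn (legendreTransform h) s := by
  intro u hu v hv huv
  obtain ⟨c, hc, hcv⟩ := hmax v hv
  obtain ⟨c', hc', hcu⟩ := hmax u hu
  calc legendreTransform h v = h c - v * c := legendreTransform_eq_of_isMaxOn hc hcv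
    _ < h c - u * c := by gcongr
    _ ≤ legendreTransform h u := sub_mul_le_legendreTransform hc' hcu hc

theorem strictConvexOn_legendreTransform
    (hmax : ∀ u ∈ s, ∃ c ∈ Ioi (0 : ℝ), IsMaxOn (fun x => h x - u * x) (Ioi 0) c) (hs : Convex ℝ s)
    (hd : ∀ x ∈ Ioi (0 : ℝ), HasDerivAt h (h' x) x) :
    StrictConvexOn ℝ s (legendreTransform h) := by
  refine ⟨hs, fun u hu v hv huv a b ha hb hab => ?_⟩
  obtain ⟨c, hc, hcw⟩ := hmax _ (hs hu hv ha.le hb.le hab)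
  obtain ⟨cu, hcu, hmaxu⟩ := hmax u hu
  obtain ⟨cv, hcv, hmaxv⟩ := hmax v hv
  have hle_u := sub_mul_le_legendreTransform hcu hmaxu hc
  have hle_v := sub_mul_le_legendreTransform hcv hmaxv hc
  -- equality in both would make `c` a maximiser for `u` and for `v`, forcing `u = h' c = v`
  have hlt : h c - u * c < legendreTransform h u ∨ h c - v * c < legendreTransform h v := by
    by_contra! heq
    have hmax_at_c {w : ℝ} {cw : ℝ} (hcw : cw ∈ Ioi (0 : ℝ))
        (hmaxw : IsMaxOn (fun x => h x - w * x) (Ioi 0) cw)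
        (hw : legendreTransform h w ≤ h c - w * c) : IsMaxOn (fun x => h x - w * x) (Ioi 0) c :=
      fun x hx => (sub_mul_le_legendreTransform hcw hmaxw hx).trans hw
    exact huv ((eq_of_isMaxOn_sub_mul hc (hmax_at_c hcu hmaxu heq.1) (hd c hc)).trans
      (eq_of_isMaxOn_sub_mul hc (hmax_at_c hcv hmaxv heq.2) (hd c hc)).symm)
  rw [legendreTransform_eq_of_isMaxOn hc hcw, smul_eq_mul, smul_eq_mul, smul_eq_mul, smul_eq_mul]
  calc h c - (a * u + b * v) * c = a * (h c - u * c) + b * (h c - v * c) := by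
        linear_combination (-h c) * hab
    _ < a * legendreTransform h u + b * legendreTransform h v := by
      rcases hlt with hlt | hlt
      · exact add_lt_add_of_lt_of_le (by gcongr) (by gcongr)
      · exact add_lt_add_of_le_of_lt (by gcongr) (by gcongr)

end LegendreTransform

theorem AntitoneOn.concaveOn_of_hasDerivAt {S : Set ℝ} {h h' : ℝ → ℝ} (hS : Convex ℝ S)
    (hSo : IsOpen S) (hd : ∀ x ∈ S, HasDerivAt h (h' x) x) (hanti : AntitoneOn h' S) :
    ConcaveOn ℝ S h := by
  refine AntitoneOn.concaveOn_of_deriv hS (fun x hx => (hd x hx).continuousAt.continuousWithinAt)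
    ?_ ?_ <;> rw [hSo.interior_eq]
  · exact fun x hx => (hd x hx).differentiableAt.differentiableWithinAt
  · intro x hx y hy hxy
    rw [(hd x hx).deriv, (hd y hy).deriv]
    exact hanti hx hy hxy

theorem ConcaveOn.isMaxOn_sub_mul_of_hasDerivAt {S : Set ℝ} {h : ℝ → ℝ} {c d : ℝ}
    (hconc : ConcaveOn ℝ S h) (hc : c ∈ S) (hd : HasDerivAt h d c) :
    IsMaxOn (fun x => h x - d * x) S c := by
  refine isMaxOn_iff.2 fun x hx => ?_
  rcases lt_trichotomy x c with hxc | rfl | hcx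
  · have := hconc.le_slope_of_hasDerivAt hx hc hxc hd
    rw [slope_def_field, le_div_iff₀ (sub_pos.2 hxc)] at this
    linarith
  · exact le_rfl
  · have := hconc.slope_le_of_hasDerivAt hc hx hcx hd
    rw [slope_def_field, div_le_iff₀ (sub_pos.2 hcx)] at this
    linarith

theorem Ioi_subset_image_Ioi_of_tendsto {g : ℝ → ℝ} (hg : ContinuousOn g (Ioi 0))
    (h0 : Tendsto g (𝓝[>] 0) atTop) (htop : Tendsto g atTop (𝓝 0)) :
    Ioi 0 ⊆ g '' Ioi 0 :=
  isPreconnected_Ioi.intermediate_value_Ioi (le_principal_iff.2 (Ioi_mem_atTop 0))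
    (le_principal_iff.2 self_mem_nhdsWithin) hg htop h0

section TwoPowers

variable {a b p q : ℝ}

theorem continuousOn_mul_rpow_add_mul_rpow :
    ContinuousOn (fun x : ℝ => a * x ^ p + b * x ^ q) (Ioi 0) :=
  fun x hx =>
    ((continuousAt_const.mul (Real.continuousAt_rpow_const x p (Or.inl (ne_of_gt hx)))).add
      (continuousAt_const.mul (Real.continuousAt_rpow_const x q (Or.inl (ne_of_gt hx))))
      ).continuousWithinAt

theorem antitoneOn_mul_rpow_add_mul_rpow (ha : 0 ≤ a) (hb : 0 ≤ b) (hp : p ≤ 0) (hq : q ≤ 0) :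
    AntitoneOn (fun x : ℝ => a * x ^ p + b * x ^ q) (Ioi 0) := fun x hx y _ hxy => by
  dsimp only
  exact add_le_add (mul_le_mul_of_nonneg_left (Real.rpow_le_rpow_of_nonpos hx hxy hp) ha)
    (mul_le_mul_of_nonneg_left (Real.rpow_le_rpow_of_nonpos hx hxy hq) hb)

theorem tendsto_mul_rpow_add_mul_rpow_nhdsGT_zero (ha : 0 < a) (hb : 0 ≤ b) (hp : p < 0) :
    Tendsto (fun x : ℝ => a * x ^ p + b * x ^ q) (𝓝[>] 0) atTop :=
  tendsto_atTop_add_right_of_le' _ 0 ((tendsto_rpow_neg_nhdsGT_zero hp).const_mul_atTop ha)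
    (eventually_nhdsWithin_of_forall fun _ hx => mul_nonneg hb (Real.rpow_nonneg (le_of_lt hx) q))

theorem tendsto_mul_rpow_add_mul_rpow_atTop (hp : p < 0) (hq : q < 0) :
    Tendsto (fun x : ℝ => a * x ^ p + b * x ^ q) atTop (𝓝 0) := by
  have hp' := tendsto_rpow_neg_atTop (neg_pos.2 hp)
  have hq' := tendsto_rpow_neg_atTop (neg_pos.2 hq)
  rw [neg_neg] at hp' hq'
  simpa using (hp'.const_mul a).add (hq'.const_mul b)

end TwoPowers

theorem hasDerivAt_utility {α γ h₀ A₀ x : ℝ} (hα : α ≠ 0) (hx : 0 < x) :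
    HasDerivAt (fun x : ℝ => (1 / α) * h₀ * x ^ α + (1 / α) * A₀ * x ^ (α * (1 - γ)))
      (h₀ * x ^ (α - 1) + A₀ * (1 - γ) * x ^ (α * (1 - γ) - 1)) x := by
  refine (((Real.hasDerivAt_rpow_const (p := α) (Or.inl hx.ne')).const_mul ((1 / α) * h₀)).add
    ((Real.hasDerivAt_rpow_const (p := α * (1 - γ)) (Or.inl hx.ne')).const_mul
      ((1 / α) * A₀))).congr_deriv ?_
  field_simp

theorem phi_strictAnti_strictConvex_general
    (α γ h₀ A₀ : ℝ)
    (hα : α < 0 ∨ (0 < α ∧ α < 1))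
    (hγ0 : 0 < γ) (hγ1 : γ ≤ 1)
    (hh0 : 0 < h₀)
    (hA₀ : 0 ≤ A₀) :
    StrictAntiOn (fun u : ℝ =>
      sSup ((fun x : ℝ =>
        (1 / α) * h₀ * x ^ α + (1 / α) * A₀ * x ^ (α * (1 - γ)) - u * x) ''
          Ioi (0 : ℝ))) (Ioi (0 : ℝ)) ∧
    StrictConvexOn ℝ (Ioi (0 : ℝ)) (fun u : ℝ =>
      sSup ((fun x : ℝ =>
        (1 / α) * h₀ * x ^ α + (1 / α) * A₀ * x ^ (α * (1 - γ)) - u * x) ''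
          Ioi (0 : ℝ))) := by
  have hα0 : α ≠ 0 := by rcases hα with h | h <;> [exact h.ne; exact h.1.ne']
  have hp : α - 1 < 0 := by rcases hα with h | h <;> linarith
  have hq : α * (1 - γ) - 1 < 0 := by rcases hα with h | h <;> nlinarith
  have hb : 0 ≤ A₀ * (1 - γ) := mul_nonneg hA₀ (by linarith)
  have hd := fun x (hx : x ∈ Ioi (0 : ℝ)) =>
    hasDerivAt_utility (γ := γ) (h₀ := h₀) (A₀ := A₀) hα0 hx
  have hconc := (antitoneOn_mul_rpow_add_mul_rpow hh0.le hb hp.le hq.le).concaveOn_of_hasDerivAt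
    (convex_Ioi 0) isOpen_Ioi hd
  have hmax : ∀ u ∈ Ioi (0 : ℝ), ∃ c ∈ Ioi (0 : ℝ), IsMaxOn (fun x =>
      (1 / α) * h₀ * x ^ α + (1 / α) * A₀ * x ^ (α * (1 - γ)) - u * x) (Ioi 0) c := by
    intro u hu
    obtain ⟨c, hc, rfl⟩ := Ioi_subset_image_Ioi_of_tendsto continuousOn_mul_rpow_add_mul_rpow
      (tendsto_mul_rpow_add_mul_rpow_nhdsGT_zero hh0 hb hp)
      (tendsto_mul_rpow_add_mul_rpow_atTop hp hq) hu
    exact ⟨c, hc, hconc.isMaxOn_sub_mul_of_hasDerivAt hc (hd c hc)⟩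
  exact ⟨strictAntiOn_legendreTransform hmax,
    strictConvexOn_legendreTransform hmax (convex_Ioi 0) hd⟩

/-- The Legendre–Fenchel transform `Φ(u) = sup_{x>0}(h_A(x) − u·x)` is strictly
decreasing and strictly convex on `(0,∞)`. -/
theorem phi_strictAnti_strictConvex
    (α γ h₀ A₀ : ℝ)
    (hα : α < 0 ∨ (0 < α ∧ α < 1))
    (hγ0 : 0 < γ) (hγ1 : γ ≤ 1)
    (hh0 : 0 < h₀) (hh1 : h₀ ≤ 1)
    (hA₀ : 0 ≤ A₀) :
    StrictAntiOn (fun u : ℝ =>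
      sSup ((fun x : ℝ =>
        (1 / α) * h₀ * x ^ α + (1 / α) * A₀ * x ^ (α * (1 - γ)) - u * x) ''
          Ioi (0 : ℝ))) (Ioi (0 : ℝ)) ∧
    StrictConvexOn ℝ (Ioi (0 : ℝ)) (fun u : ℝ =>
      sSup ((fun x : ℝ =>
        (1 / α) * h₀ * x ^ α + (1 / α) * A₀ * x ^ (α * (1 - γ)) - u * x) ''
          Ioi (0 : ℝ))) :=
  phi_strictAnti_strictConvex_general α γ h₀ A₀ hα hγ0 hγ1 hh0 hA₀
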